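/- Let q be a power of an odd prime and let H be the group of pairs (A, B) ∈ GL_2(F_q) × GL_2(F_q) satisfying det(A)·det(B) = 1, with componentwise multiplication. If (A, B) ∈ H is unipotent, i.e., (A − I)² = 0 and (B − I)² = 0, then (A, B) is conjugate in H to (A², B²): there exists (X, Y) ∈ H with X A X⁻¹ = A² and Y B Y⁻¹ = B². -/

import Mathlib

/-!
A unipotent `A ≠ 1` in `GL₂(F)` is conjugate to `U = !![1, 1; 0, 1]`: if `N = A - 1` and
`N v ≠ 0`, then `N` maps the basis `(N v, v)` to `(0, N v)`. Since `D = !![2s, 0; 0, s]`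
conjugates `U` to `U²`, conjugating `D` back gives an element taking `A` to `A²` with determinant
`2 s²` for any `s ≠ 0` we like (for `A = 1` take `D` itself). As `2 ≠ 0` in odd characteristic,
choosing `s = 1` for `A` and `s = 1/2` for `B` makes the determinants multiply to `1`.
-/

open Matrix

theorem FiniteField.two_ne_zero_of_odd_card {F : Type*} [Field F] [Fintype F]
    (h : Odd (Fintype.card F)) : (2 : F) ≠ 0 :=
  Ring.two_ne_zero fun h2 => Nat.not_even_iff_odd.mpr h
    (Nat.even_iff.mpr (FiniteField.even_card_iff_char_two.mp h2))

variable {F : Type*} [Field F]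

theorem exists_isUnit_mul_eq_mul_single_of_sq_eq_zero {N : Matrix (Fin 2) (Fin 2) F}
    (hN : N ^ 2 = 0) (hN0 : N ≠ 0) :
    ∃ P : Matrix (Fin 2) (Fin 2) F, IsUnit P ∧ N * P = P * single 0 1 1 := by
  obtain ⟨v, hv⟩ : ∃ v, N *ᵥ v ≠ 0 := by
    by_contra! h
    exact hN0 (ext_iff_mulVec.mpr fun v => by simp [h v])
  have hNNv : N *ᵥ (N *ᵥ v) = 0 := by rw [mulVec_mulVec, ← pow_two, hN, zero_mulVec]
  refine ⟨(of ![N *ᵥ v, v])ᵀ, ?_, ?_⟩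
  · rw [← linearIndependent_cols_iff_isUnit]
    refine (LinearIndependent.pair_iff' hv).mpr fun a ha => hv ?_
    rw [← ha, mulVec_smul, hNNv, smul_zero]
  · ext i j
    fin_cases j
    · simpa [mul_apply, Fin.sum_univ_two, mulVec, dotProduct] using congrFun hNNv i
    · fin_cases i <;> simp [mul_apply, Fin.sum_univ_two]

noncomputable def upperUnipotent : GL (Fin 2) F :=
  GeneralLinearGroup.mkOfDetNeZero !![1, 1; 0, 1] (by simp [det_fin_two])

noncomputable def diagScaledTwoOne {s : F} (h2s : 2 * s ≠ 0) : GL (Fin 2) F :=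
  GeneralLinearGroup.mkOfDetNeZero !![2 * s, 0; 0, s] (by simpa [det_fin_two] using h2s)

theorem exists_conj_upperUnipotent {A : GL (Fin 2) F}
    (hA : ((A : Matrix (Fin 2) (Fin 2) F) - 1) ^ 2 = 0) (hA1 : A ≠ 1) :
    ∃ P : GL (Fin 2) F, P * upperUnipotent * P⁻¹ = A := by
  have hN0 : (A : Matrix (Fin 2) (Fin 2) F) - 1 ≠ 0 :=
    fun h => hA1 (Units.ext (sub_eq_zero.mp h))
  obtain ⟨P, hP, hNP⟩ := exists_isUnit_mul_eq_mul_single_of_sq_eq_zero hA hN0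
  refine ⟨hP.unit, ?_⟩
  rw [mul_inv_eq_iff_eq_mul, Units.ext_iff, Units.val_mul, Units.val_mul, IsUnit.unit_spec]
  have hU : (upperUnipotent : GL (Fin 2) F).val = 1 + single 0 1 1 := by
    ext i j; fin_cases i <;> fin_cases j <;> simp [upperUnipotent]
  rw [hU, mul_add, mul_one, ← hNP, sub_mul, one_mul, add_sub_cancel]

theorem diagScaledTwoOne_conj_upperUnipotent {s : F} (h2s : 2 * s ≠ 0) :
    diagScaledTwoOne h2s * upperUnipotent * (diagScaledTwoOne h2s)⁻¹ = upperUnipotent ^ 2 := by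
  rw [mul_inv_eq_iff_eq_mul]
  ext i j
  fin_cases i <;> fin_cases j <;>
    simp [diagScaledTwoOne, upperUnipotent, pow_two, one_add_one_eq_two]

theorem exists_det_eq_conj_eq_sq {A : GL (Fin 2) F}
    (hA : ((A : Matrix (Fin 2) (Fin 2) F) - 1) ^ 2 = 0) {s : F} (h2s : 2 * s ≠ 0) :
    ∃ X : GL (Fin 2) F,
      (X : Matrix (Fin 2) (Fin 2) F).det = 2 * s ^ 2 ∧ X * A * X⁻¹ = A ^ 2 := by
  set D := diagScaledTwoOne h2s with hD_def
  have hD : (D : Matrix (Fin 2) (Fin 2) F).det = 2 * s ^ 2 := by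
    simp [D, diagScaledTwoOne, det_fin_two]; ring
  rcases eq_or_ne A 1 with rfl | hA1
  · exact ⟨D, hD, by simp⟩
  obtain ⟨P, rfl⟩ := exists_conj_upperUnipotent hA hA1
  refine ⟨P * D * P⁻¹, ?_, ?_⟩
  · rw [Units.val_mul, Units.val_mul, coe_units_inv, det_conj P.isUnit, hD]
  · calc P * D * P⁻¹ * (P * upperUnipotent * P⁻¹) * (P * D * P⁻¹)⁻¹
        = P * (D * upperUnipotent * D⁻¹) * P⁻¹ := by group
      _ = P * upperUnipotent ^ 2 * P⁻¹ := by rw [hD_def, diagScaledTwoOne_conj_upperUnipotent]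
      _ = (P * upperUnipotent * P⁻¹) ^ 2 := conj_pow.symm

theorem levi_unipotent_conj_sq_general
    {F : Type} [Field F] [Fintype F]
    (hq : ∃ p k : ℕ, p.Prime ∧ Odd p ∧ 0 < k ∧ Fintype.card F = p ^ k)
    (A B : Matrix.GeneralLinearGroup (Fin 2) F)
    (hA : ((A : Matrix (Fin 2) (Fin 2) F) - 1) ^ 2 = 0)
    (hB : ((B : Matrix (Fin 2) (Fin 2) F) - 1) ^ 2 = 0) :
    ∃ X Y : Matrix.GeneralLinearGroup (Fin 2) F,
      (X : Matrix (Fin 2) (Fin 2) F).det * (Y : Matrix (Fin 2) (Fin 2) F).det = 1 ∧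
      X * A * X⁻¹ = A ^ 2 ∧ Y * B * Y⁻¹ = B ^ 2 := by
  obtain ⟨p, k, -, hp, -, hcard⟩ := hq
  have h2 : (2 : F) ≠ 0 := FiniteField.two_ne_zero_of_odd_card (hcard ▸ hp.pow)
  obtain ⟨X, hXdet, hX⟩ := exists_det_eq_conj_eq_sq hA (s := 1) (by simpa using h2)
  obtain ⟨Y, hYdet, hY⟩ := exists_det_eq_conj_eq_sq hB (s := 2⁻¹) (by simp [h2])
  refine ⟨X, Y, ?_, hX, hY⟩
  rw [hXdet, hYdet]
  field_simp

/-- Let `q` be a power of an odd prime and let `H` be the group of pairs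
`(A, B) ∈ GL₂(F_q) × GL₂(F_q)` with `det A · det B = 1`. Every unipotent element `(A, B)` of
`H` (i.e. `(A - I)² = 0 = (B - I)²`) is conjugate in `H` to `(A², B²)`. -/
theorem levi_unipotent_conj_sq
    {F : Type} [Field F] [Fintype F]
    (hq : ∃ p k : ℕ, p.Prime ∧ Odd p ∧ 0 < k ∧ Fintype.card F = p ^ k)
    (A B : Matrix.GeneralLinearGroup (Fin 2) F)
    (hdet : (A : Matrix (Fin 2) (Fin 2) F).det * (B : Matrix (Fin 2) (Fin 2) F).det = 1)
    (hA : ((A : Matrix (Fin 2) (Fin 2) F) - 1) ^ 2 = 0)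
    (hB : ((B : Matrix (Fin 2) (Fin 2) F) - 1) ^ 2 = 0) :
    ∃ X Y : Matrix.GeneralLinearGroup (Fin 2) F,
      (X : Matrix (Fin 2) (Fin 2) F).det * (Y : Matrix (Fin 2) (Fin 2) F).det = 1 ∧
      X * A * X⁻¹ = A ^ 2 ∧ Y * B * Y⁻¹ = B ^ 2 :=
  levi_unipotent_conj_sq_general hq A B hA hB
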